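/- arXiv:2601.13341 — 3 statements merged into one kernel-verified Lean document; each statement's English description precedes it below -/
import Mathlib

section
/- Single-swap lemma: Let A and B be actions such that A preserves the success of B and commutes(A, B) holds. Suppose ((g1, ℓA), (g2, ℓA')) is a step of A and ((g2, ℓB), (g3, ℓB')) is a step of B. Then at least one of the following holds: (i) there exists ĝ such that ((g1, ℓB), (ĝ, ℓB')) is a step of B and ((ĝ, ℓA), (g3, ℓA')) is a step of A; (ii) (g1, ℓB) ∉ ρ_B; (iii) (g1, ℓB) ∈ ρ_B and there exists a step of B of the form ((g1, ℓB), (ĝ, ℓ̂)) with (ĝ, ℓA) ∉ ρ_A. -/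
/-- A step of action `X = (ρX, τX)`: a transition in `τX` from a state satisfying the gate. -/
def isStep {G L : Type*} (ρX : Set (G × L)) (τX : Set ((G × L) × (G × L)))
    (p q : G × L) : Prop :=
  (p, q) ∈ τX ∧ p ∈ ρX

/-- The weakest liberal precondition `wlp(X, ρY)`. -/
def wlp {G L : Type*} (ρX : Set (G × L)) (τX : Set ((G × L) × (G × L)))
    (ρY : Set (G × L)) : Set (G × L × L) :=
  {p | (p.1, p.2.1) ∈ ρX ∧
    ∀ g' ℓ', ((p.1, p.2.1), (g', ℓ')) ∈ τX → (g', p.2.2) ∈ ρY}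

/-- `X` preserves the success of `Y`. -/
def preservesSuccess {G L : Type*} (ρX : Set (G × L)) (τX : Set ((G × L) × (G × L)))
    (ρY : Set (G × L)) : Prop :=
  ∀ (g : G) (ℓX ℓY : L), (g, ℓX) ∈ ρX → (g, ℓY) ∈ ρY → (g, ℓX, ℓY) ∈ wlp ρX τX ρY

/-- `commutes(X, Y)`. -/
def commutes {G L : Type*} (ρX : Set (G × L)) (τX : Set ((G × L) × (G × L)))
    (ρY : Set (G × L)) (τY : Set ((G × L) × (G × L))) : Prop :=
  ∀ (g g' gb : G) (ℓX ℓY ℓX' ℓY' : L),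
    (g, ℓX, ℓY) ∈ wlp ρX τX ρY → (g, ℓY, ℓX) ∈ wlp ρY τY ρX →
    isStep ρX τX (g, ℓX) (gb, ℓX') → isStep ρY τY (gb, ℓY) (g', ℓY') →
    ∃ gh : G, isStep ρY τY (g, ℓY) (gh, ℓY') ∧ isStep ρX τX (gh, ℓX) (g', ℓX')

/-- Single-swap lemma. -/
theorem single_swap {G L : Type*}
    (ρA : Set (G × L)) (τA : Set ((G × L) × (G × L)))
    (ρB : Set (G × L)) (τB : Set ((G × L) × (G × L)))
    (hps : preservesSuccess ρA τA ρB)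
    (hcom : commutes ρA τA ρB τB)
    (g1 g2 g3 : G) (ℓA ℓA' ℓB ℓB' : L)
    (hA : isStep ρA τA (g1, ℓA) (g2, ℓA'))
    (hB : isStep ρB τB (g2, ℓB) (g3, ℓB')) :
    (∃ gh : G, isStep ρB τB (g1, ℓB) (gh, ℓB') ∧ isStep ρA τA (gh, ℓA) (g3, ℓA')) ∨
    ((g1, ℓB) ∉ ρB) ∨
    ((g1, ℓB) ∈ ρB ∧ ∃ (gh : G) (ℓh : L),
      isStep ρB τB (g1, ℓB) (gh, ℓh) ∧ (gh, ℓA) ∉ ρA) := by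
  by_cases hgB : (g1, ℓB) ∈ ρB
  · by_cases hw : ∀ g' ℓ', ((g1, ℓB), (g', ℓ')) ∈ τB → (g', ℓA) ∈ ρA
    · left
      exact hcom g1 g3 g2 ℓA ℓB ℓA' ℓB'
        (hps g1 ℓA ℓB hA.2 hgB) ⟨hgB, hw⟩ hA hB
    · right; right
      push_neg at hw
      obtain ⟨gh, ℓh, hτ, hn⟩ := hw
      exact ⟨hgB, gh, ℓh, ⟨hτ, hgB⟩, hn⟩
  · right; left; exact hgB
end

section
/- Non-failing right-mover swap lemma: Let A and B be actions such that ρ_A = G × L (A never fails), A preserves the success of B, and commutes(A, B) holds. If ((g1, ℓA), (g2, ℓA')) is a step of A and ((g2, ℓB), (g3, ℓB')) is a step of B, then either there exists ĝ such that ((g1, ℓB), (ĝ, ℓB')) is a step of B and ((ĝ, ℓA), (g3, ℓA')) is a step of A, or (g1, ℓB) ∉ ρ_B. -/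
/-- Non-failing right-mover swap lemma. -/
theorem nonfailing_right_mover_swap {G L : Type*}
    (ρA : Set (G × L)) (τA : Set ((G × L) × (G × L)))
    (ρB : Set (G × L)) (τB : Set ((G × L) × (G × L)))
    (hnofail : ρA = Set.univ)
    (hps : preservesSuccess ρA τA ρB)
    (hcom : commutes ρA τA ρB τB)
    (g1 g2 g3 : G) (ℓA ℓA' ℓB ℓB' : L)
    (hA : isStep ρA τA (g1, ℓA) (g2, ℓA'))
    (hB : isStep ρB τB (g2, ℓB) (g3, ℓB')) :
    (∃ gh : G, isStep ρB τB (g1, ℓB) (gh, ℓB') ∧ isStep ρA τA (gh, ℓA) (g3, ℓA')) ∨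
    (g1, ℓB) ∉ ρB := by
  by_cases hρB : (g1, ℓB) ∈ ρB
  · left
    have hwlpA : (g1, ℓA, ℓB) ∈ wlp ρA τA ρB :=
      hps g1 ℓA ℓB (by simp [hnofail]) hρB
    have hwlpB : (g1, ℓB, ℓA) ∈ wlp ρB τB ρA :=
      ⟨hρB, fun g' ℓ' _ => by simp [hnofail]⟩
    exact hcom g1 g3 g2 ℓA ℓB ℓA' ℓB' hwlpA hwlpB hA hB
  · exact Or.inr hρB
end

section
/- For the shared-set actions A (which removes its parameter from the set and never fails) and B (which asserts membership of its parameter and leaves the set unchanged), all four commutation properties commutes(A, B), commutes(B, A), commutes(A, A) and commutes(B, B) hold under the wlp-based definition of commutes. -/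
/-- Gate of action `A`: all states (`A` never fails). -/
def gateA (α : Type*) : Set (Set α × α) := Set.univ

/-- Transition relation of action `A`: remove the parameter from the shared set. -/
def transA (α : Type*) : Set ((Set α × α) × (Set α × α)) :=
  {p | p.2.1 = p.1.1 \ {p.1.2} ∧ p.2.2 = p.1.2}

/-- Gate of action `B`: the parameter is a member of the shared set. -/
def gateB (α : Type*) : Set (Set α × α) := {q | q.2 ∈ q.1}

/-- Transition relation of action `B`: leave the state unchanged. -/
def transB (α : Type*) : Set ((Set α × α) × (Set α × α)) := {p | p.2 = p.1}

/-- All four commutation properties hold for the shared-set actions `A` and `B`. -/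
theorem sharedSet_commutes (α : Type*) :
    commutes (gateA α) (transA α) (gateB α) (transB α) ∧
    commutes (gateB α) (transB α) (gateA α) (transA α) ∧
    commutes (gateA α) (transA α) (gateA α) (transA α) ∧
    commutes (gateB α) (transB α) (gateB α) (transB α) := by
  refine ⟨?_, ?_, ?_, ?_⟩
  · rintro g g' gb ℓX ℓY ℓX' ℓY' hw1 hw2 ⟨h1, h2⟩ ⟨h3, h4⟩
    simp only [wlp, gateA, transA, gateB, transB, isStep, Set.mem_setOf_eq,
      Set.mem_univ, Prod.mk.injEq] at *
    obtain ⟨ha, hb⟩ := h1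
    obtain ⟨hc, hd⟩ := h3
    refine ⟨g, ⟨⟨rfl, hd⟩, ?_⟩, ⟨hc.trans ha, hb⟩, trivial⟩
    exact (ha ▸ h4).1
  · rintro g g' gb ℓX ℓY ℓX' ℓY' hw1 hw2 ⟨h1, h2⟩ ⟨h3, h4⟩
    simp only [wlp, gateA, transA, gateB, transB, isStep, Set.mem_setOf_eq,
      Set.mem_univ, Prod.mk.injEq] at *
    obtain ⟨ha, hb⟩ := h1
    obtain ⟨hc, hd⟩ := h3
    refine ⟨g \ {ℓY}, ⟨⟨rfl, hd⟩, trivial⟩, ⟨?_, hb⟩, hw2.2 _ ℓY ⟨rfl, rfl⟩⟩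
    rw [hc, ha]
  · rintro g g' gb ℓX ℓY ℓX' ℓY' hw1 hw2 ⟨h1, h2⟩ ⟨h3, h4⟩
    simp only [wlp, gateA, transA, gateB, transB, isStep, Set.mem_setOf_eq,
      Set.mem_univ, Prod.mk.injEq] at *
    obtain ⟨ha, hb⟩ := h1
    obtain ⟨hc, hd⟩ := h3
    refine ⟨g \ {ℓY}, ⟨⟨rfl, hd⟩, trivial⟩, ⟨?_, hb⟩, trivial⟩
    rw [hc, ha, Set.diff_diff_comm]
  · rintro g g' gb ℓX ℓY ℓX' ℓY' hw1 hw2 ⟨h1, h2⟩ ⟨h3, h4⟩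
    simp only [wlp, gateA, transA, gateB, transB, isStep, Set.mem_setOf_eq,
      Set.mem_univ, Prod.mk.injEq] at *
    obtain ⟨ha, hb⟩ := h1
    obtain ⟨hc, hd⟩ := h3
    exact ⟨g, ⟨⟨rfl, hd⟩, hw1.2 g ℓX ⟨rfl, rfl⟩⟩, ⟨hc.trans ha, hb⟩, h2⟩
end
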